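/- arXiv:2505.17535 — 5 statements merged into one kernel-verified Lean document; each statement's English description precedes it below -/
import Mathlib

section
/- Let Ω = (a_x, b_x) × (a_y, b_y) be a (possibly unbounded) open rectangle in ℝ² and let u ∈ L^1(Ω) ∩ BV(Ω). Define v(x) = ∫_{a_y}^{b_y} u(x,y) dy for a.e. x ∈ (a_x, b_x). Then v ∈ L^1(a_x, b_x) ∩ BV(a_x, b_x), and TV(v, (a_x,b_x)) ≤ ∫_{a_y}^{b_y} TV(u(·,y), (a_x,b_x)) dy ≤ TV(u, Ω). -/
/-!
Fix test functions `e n` on `(ax, bx)` whose derivatives are uniformly dense among derivatives of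
test functions, and put `g n y = ∫ u(x, y) (e n)'(x) dx`. For a.e. `y` the variation of the slice
`u(·, y)` is `sup_n (g n y)⁺`. To bound `∫ sup_n (g n)⁺ dy` by `TV(u, Ω)`, split `(ay, bY)` into the
sets where the first positive maximum of `g 0, …, g N` is attained, approximate their indicators by
smooth bumps `η n` with pairwise disjoint supports (inner and outer regularity of `|g n| dy`), and
test `u` against the field `(∑ e n(x) η n(y), 0)`, whose divergence is `∑ (e n)'(x) η n(y)`;
monotone convergence then passes to the full supremum. The bound on `TV(v)` is Fubini:
`∫ v ψ' dx = ∫ (∫ u(x, y) ψ'(x) dx) dy` for every test function `ψ`.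
-/

open MeasureTheory Set

/-- The divergence of a vector field `ψ : ℝ² → ℝ²`. -/
noncomputable def div2 (ψ : ℝ × ℝ → ℝ × ℝ) (p : ℝ × ℝ) : ℝ :=
  (fderiv ℝ ψ p ((1 : ℝ), (0 : ℝ))).1 + (fderiv ℝ ψ p ((0 : ℝ), (1 : ℝ))).2

/-- Admissible test vector field for the 2D total variation on `Ω`. -/
def IsTestVF (Ω : Set (ℝ × ℝ)) (ψ : ℝ × ℝ → ℝ × ℝ) : Prop :=
  ContDiff ℝ 1 ψ ∧ HasCompactSupport ψ ∧ tsupport ψ ⊆ Ω ∧ ∀ p, ‖ψ p‖ ≤ 1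

/-- The total variation of `u` over `Ω ⊆ ℝ²`. -/
noncomputable def TV2 (u : ℝ × ℝ → ℝ) (Ω : Set (ℝ × ℝ)) : ℝ :=
  sSup {r : ℝ | ∃ ψ, IsTestVF Ω ψ ∧ r = ∫ p in Ω, u p * div2 ψ p}

/-- `u` has bounded variation on `Ω ⊆ ℝ²`. -/
def BV2 (u : ℝ × ℝ → ℝ) (Ω : Set (ℝ × ℝ)) : Prop :=
  BddAbove {r : ℝ | ∃ ψ, IsTestVF Ω ψ ∧ r = ∫ p in Ω, u p * div2 ψ p}

/-- The total variation of `u : ℝ → ℝ` over the interval `(a, b)`. -/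
noncomputable def TV1 (u : ℝ → ℝ) (a b : ℝ) : ℝ :=
  sSup {r : ℝ | ∃ ψ : ℝ → ℝ, ContDiff ℝ 1 ψ ∧ HasCompactSupport ψ ∧
    tsupport ψ ⊆ Ioo a b ∧ (∀ x, |ψ x| ≤ 1) ∧ r = ∫ x in Ioo a b, u x * deriv ψ x}

/-- `u : ℝ → ℝ` has bounded variation on `(a, b)`. -/
def BV1 (u : ℝ → ℝ) (a b : ℝ) : Prop :=
  BddAbove {r : ℝ | ∃ ψ : ℝ → ℝ, ContDiff ℝ 1 ψ ∧ HasCompactSupport ψ ∧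
    tsupport ψ ⊆ Ioo a b ∧ (∀ x, |ψ x| ≤ 1) ∧ r = ∫ x in Ioo a b, u x * deriv ψ x}

open Filter Function
open scoped ENNReal Manifold

lemma MeasureTheory.Integrable.mul_comp_of_abs_le {X : Type*} [MeasurableSpace X]
    {μ : Measure X} {f : X → ℝ} (hf : Integrable f μ) {φ : ℝ → ℝ} (hφ : Continuous φ) {C : ℝ}
    (hC : ∀ x, |φ x| ≤ C) {π : X → ℝ} (hπ : Measurable π) : Integrable (fun p => f p * φ (π p)) μ :=
  hf.mul_bdd (hφ.measurable.comp hπ).aestronglyMeasurable (c := C)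
    (Eventually.of_forall fun p => hC (π p))

lemma abs_integral_mul_sub_le {X : Type*} [MeasurableSpace X] {μ : Measure X} {f w w' : X → ℝ}
    {ε : ℝ} (hf : Integrable f μ) (hw : Integrable (fun x => f x * w x) μ)
    (hw' : Integrable (fun x => f x * w' x) μ) (hε : ∀ x, |w x - w' x| ≤ ε) :
    |∫ x, f x * w x ∂μ - ∫ x, f x * w' x ∂μ| ≤ ε * ∫ x, |f x| ∂μ := by
  rw [← integral_sub hw hw', ← integral_const_mul ε, ← Real.norm_eq_abs]
  refine norm_integral_le_of_norm_le (hf.abs.const_mul ε) (Eventually.of_forall fun x => ?_)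
  rw [Real.norm_eq_abs, ← mul_sub, abs_mul, mul_comm]
  exact mul_le_mul_of_nonneg_right (hε x) (abs_nonneg _)

def IsTestFun (a b : ℝ) (ψ : ℝ → ℝ) : Prop :=
  ContDiff ℝ 1 ψ ∧ HasCompactSupport ψ ∧ tsupport ψ ⊆ Ioo a b ∧ ∀ x, |ψ x| ≤ 1

namespace IsTestFun

variable {a b : ℝ} {ψ : ℝ → ℝ}

lemma zero (a b : ℝ) : IsTestFun a b 0 :=
  ⟨contDiff_const, HasCompactSupport.zero, by simp, by simp⟩

lemma continuous_deriv (hψ : IsTestFun a b ψ) : Continuous (deriv ψ) :=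
  hψ.1.continuous_deriv le_rfl

lemma deriv_eq_zero_of_notMem (hψ : IsTestFun a b ψ) {x : ℝ} (hx : x ∉ Icc a b) :
    deriv ψ x = 0 :=
  notMem_support.1 fun h => hx (Ioo_subset_Icc_self (hψ.2.2.1 (support_deriv_subset h)))

lemma exists_abs_deriv_le (hψ : IsTestFun a b ψ) : ∃ C, ∀ x, |deriv ψ x| ≤ C :=
  hψ.2.1.deriv.exists_bound_of_continuous hψ.continuous_deriv

lemma integrable_mul_deriv_comp {X : Type*} [MeasurableSpace X] {μ : Measure X}
    (hψ : IsTestFun a b ψ) {f : X → ℝ} (hf : Integrable f μ) {π : X → ℝ} (hπ : Measurable π) :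
    Integrable (fun p => f p * deriv ψ (π p)) μ :=
  let ⟨_, hC⟩ := hψ.exists_abs_deriv_le
  hf.mul_comp_of_abs_le hψ.continuous_deriv hC hπ

lemma integrable_mul_deriv {μ : Measure ℝ} (hψ : IsTestFun a b ψ) {f : ℝ → ℝ}
    (hf : Integrable f μ) : Integrable (fun x => f x * deriv ψ x) μ :=
  hψ.integrable_mul_deriv_comp hf measurable_id

end IsTestFun

lemma exists_seq_isTestFun_dense (a b : ℝ) :
    ∃ e : ℕ → ℝ → ℝ, (∀ n, IsTestFun a b (e n)) ∧
      ∀ ψ, IsTestFun a b ψ → ∀ ε > 0, ∃ n, ∀ x, |deriv ψ x - deriv (e n) x| ≤ ε := by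
  -- derivatives of test functions vanish off `[a, b]`, where they live in the separable `C([a, b])`
  let D : {ψ // IsTestFun a b ψ} → C(Icc a b, ℝ) :=
    fun ψ => ⟨fun x => deriv ψ.1 x, ψ.2.continuous_deriv.comp continuous_subtype_val⟩
  have : Nonempty (range D) := ⟨⟨_, ⟨0, IsTestFun.zero a b⟩, rfl⟩⟩
  obtain ⟨d, hd⟩ := TopologicalSpace.exists_dense_seq (range D)
  choose e he using fun n => (d n).2
  refine ⟨fun n => (e n).1, fun n => (e n).2, fun ψ hψ ε hε => ?_⟩
  obtain ⟨n, hn⟩ := Metric.denseRange_iff.1 hd ⟨D ⟨ψ, hψ⟩, _, rfl⟩ ε hε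
  refine ⟨n, fun x => ?_⟩
  by_cases hx : x ∈ Icc a b
  · rw [Subtype.dist_eq, ← he n] at hn
    exact (ContinuousMap.dist_apply_le_dist ⟨x, hx⟩).trans hn.le
  · simp [hψ.deriv_eq_zero_of_notMem hx, (e n).2.deriv_eq_zero_of_notMem hx, hε.le]

def testIntegrals (f : ℝ → ℝ) (a b : ℝ) : Set ℝ :=
  (fun ψ => ∫ x in Ioo a b, f x * deriv ψ x) '' {ψ | IsTestFun a b ψ}

lemma testIntegrals_eq (f : ℝ → ℝ) (a b : ℝ) :
    {r : ℝ | ∃ ψ : ℝ → ℝ, ContDiff ℝ 1 ψ ∧ HasCompactSupport ψ ∧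
      tsupport ψ ⊆ Ioo a b ∧ (∀ x, |ψ x| ≤ 1) ∧ r = ∫ x in Ioo a b, f x * deriv ψ x} =
      testIntegrals f a b := by
  ext r
  constructor
  · rintro ⟨ψ, h₁, h₂, h₃, h₄, rfl⟩
    exact ⟨ψ, ⟨h₁, h₂, h₃, h₄⟩, rfl⟩
  · rintro ⟨ψ, ⟨h₁, h₂, h₃, h₄⟩, rfl⟩
    exact ⟨ψ, h₁, h₂, h₃, h₄, rfl⟩

lemma TV1_eq_sSup (f : ℝ → ℝ) (a b : ℝ) : TV1 f a b = sSup (testIntegrals f a b) := by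
  rw [TV1, testIntegrals_eq]

lemma BV1_iff_bddAbove (f : ℝ → ℝ) (a b : ℝ) : BV1 f a b ↔ BddAbove (testIntegrals f a b) := by
  rw [BV1, testIntegrals_eq]

lemma zero_mem_testIntegrals (f : ℝ → ℝ) (a b : ℝ) : 0 ∈ testIntegrals f a b :=
  ⟨0, IsTestFun.zero a b, by simp⟩

lemma mem_upperBounds_testIntegrals {a b : ℝ} {e : ℕ → ℝ → ℝ} (he : ∀ n, IsTestFun a b (e n))
    (hdense : ∀ ψ, IsTestFun a b ψ → ∀ ε > 0, ∃ n, ∀ x, |deriv ψ x - deriv (e n) x| ≤ ε)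
    {f : ℝ → ℝ} (hf : IntegrableOn f (Ioo a b)) {c : ℝ}
    (hc : ∀ n, ∫ x in Ioo a b, f x * deriv (e n) x ≤ c) :
    c ∈ upperBounds (testIntegrals f a b) := by
  rintro _ ⟨ψ, hψ, rfl⟩
  refine le_of_forall_pos_le_add fun ε hε => ?_
  set L := ∫ x in Ioo a b, |f x|
  have hL : 0 ≤ L := integral_nonneg fun x => abs_nonneg _
  obtain ⟨n, hn⟩ := hdense ψ hψ (ε / (L + 1)) (by positivity)
  have hdiff := abs_integral_mul_sub_le hf (hψ.integrable_mul_deriv hf)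
    ((he n).integrable_mul_deriv hf) hn
  have hεL : ε / (L + 1) * L ≤ ε := by
    rw [div_mul_eq_mul_div, div_le_iff₀ (by positivity)]
    nlinarith
  show ∫ x in Ioo a b, f x * deriv ψ x ≤ c + ε
  linarith [(abs_le.1 hdiff).2, hc n]

lemma bddAbove_and_sSup_eq_toReal_iSup_ofReal {S : Set ℝ} {r : ℕ → ℝ} (h0 : 0 ∈ S)
    (hrS : ∀ n, r n ∈ S) (hub : ∀ c, (∀ n, r n ≤ c) → c ∈ upperBounds S)
    (hfin : ⨆ n, ENNReal.ofReal (r n) ≠ ∞) :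
    BddAbove S ∧ sSup S = (⨆ n, ENNReal.ofReal (r n)).toReal := by
  have hr : ∀ n, r n ≤ (⨆ n, ENNReal.ofReal (r n)).toReal := fun n =>
    ((le_max_left (r n) 0).trans_eq ENNReal.toReal_ofReal'.symm).trans
      (ENNReal.toReal_mono hfin (le_iSup (fun m => ENNReal.ofReal (r m)) n))
  have hS : BddAbove S := ⟨_, hub _ hr⟩
  refine ⟨hS, le_antisymm (csSup_le ⟨0, h0⟩ (hub _ hr)) ?_⟩
  exact ENNReal.toReal_le_of_le_ofReal (le_csSup hS h0)
    (iSup_le fun n => ENNReal.ofReal_le_ofReal (le_csSup hS (hrS n)))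

lemma exists_contDiff_cutoff {E : Type*} [NormedAddCommGroup E] [NormedSpace ℝ E]
    [FiniteDimensional ℝ E] {K V : Set E} (hK : IsCompact K) (hV : IsOpen V) (hKV : K ⊆ V) :
    ∃ η : E → ℝ, ContDiff ℝ 1 η ∧ HasCompactSupport η ∧ tsupport η ⊆ V ∧
      EqOn η 1 K ∧ ∀ y, η y ∈ Icc 0 1 := by
  obtain ⟨L, hL, hKL, hLV⟩ := exists_compact_between hK hV hKV
  obtain ⟨η, hη0, hη1, hη01⟩ := exists_contMDiffMap_zero_one_of_isClosed 𝓘(ℝ, E) (n := 1)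
    isOpen_interior.isClosed_compl hK.isClosed (disjoint_compl_left.mono_right hKL)
  have hsupp : tsupport η ⊆ L :=
    closure_minimal (fun y hy => interior_subset (not_not.1 fun h => hy (hη0 h)))
      hL.isClosed
  exact ⟨η, contMDiff_iff_contDiff.1 η.contMDiff, hL.of_isClosed_subset (isClosed_tsupport _) hsupp,
    hsupp.trans hLV, hη1, hη01⟩

lemma exists_isOpen_pairwiseDisjoint_of_isCompact {X ι : Type*} [TopologicalSpace X] [T2Space X]
    {K : ι → Set X} (hK : ∀ i, IsCompact (K i)) {s : Finset ι}
    (hd : (s : Set ι).PairwiseDisjoint K) :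
    ∃ W : ι → Set X, (∀ i, IsOpen (W i)) ∧ (∀ i, K i ⊆ W i) ∧ (s : Set ι).PairwiseDisjoint W := by
  have hsep : ∀ i j, ∃ P Q : Set X, IsOpen P ∧ IsOpen Q ∧ K i ⊆ P ∧ K j ⊆ Q ∧
      (i ∈ s → j ∈ s → i ≠ j → Disjoint P Q) := by
    intro i j
    by_cases hij : i ∈ s ∧ j ∈ s ∧ i ≠ j
    · obtain ⟨P, Q, hP, hQ, hKP, hKQ, hPQ⟩ :=
        SeparatedNhds.of_isCompact_isCompact (hK i) (hK j) (hd hij.1 hij.2.1 hij.2.2)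
      exact ⟨P, Q, hP, hQ, hKP, hKQ, fun _ _ _ => hPQ⟩
    · exact ⟨univ, univ, isOpen_univ, isOpen_univ, subset_univ _, subset_univ _,
        fun hi hj hne => absurd ⟨hi, hj, hne⟩ hij⟩
  choose P Q hP hQ hKP hKQ hPQ using hsep
  refine ⟨fun i => ⋂ j ∈ s, P i j ∩ Q j i, fun i => isOpen_biInter_finset fun j _ =>
    (hP i j).inter (hQ j i), fun i => subset_iInter₂ fun j _ => subset_inter (hKP i j) (hKQ j i),
    fun i hi j hj hij => (hPQ i j hi hj hij).mono ?_ ?_⟩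
  · exact (biInter_subset_of_mem hj).trans inter_subset_left
  · exact (biInter_subset_of_mem hi).trans inter_subset_right

lemma Finset.sum_le_one_of_pairwiseDisjoint_support {ι X : Type*} {s : Finset ι}
    {f : ι → X → ℝ} (h1 : ∀ i ∈ s, ∀ x, f i x ≤ 1)
    (hd : (s : Set ι).PairwiseDisjoint fun i => support (f i)) (x : X) :
    ∑ i ∈ s, f i x ≤ 1 := by
  by_cases h : ∃ i ∈ s, f i x ≠ 0
  · obtain ⟨i, hi, hix⟩ := h
    rw [Finset.sum_eq_single_of_mem i hi fun j hj hji => by_contra fun hjx =>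
      Set.disjoint_left.1 (hd hj hi hji) hjx hix]
    exact h1 i hi x
  · push Not at h
    rw [Finset.sum_eq_zero h]
    exact zero_le_one

lemma setIntegral_abs_lt_of_withDensity_lt {X : Type*} [MeasurableSpace X] {μ : Measure X}
    {g : X → ℝ} (hg : Integrable g μ) {S : Set X} (hS : MeasurableSet S) {ε : ℝ}
    (h : μ.withDensity (fun y => ‖g y‖ₑ) S < ENNReal.ofReal ε) :
    ∫ y in S, |g y| ∂μ < ε := by
  rw [withDensity_apply _ hS] at h
  calc ∫ y in S, |g y| ∂μ = (∫⁻ y in S, ‖g y‖ₑ ∂μ).toReal :=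
        integral_norm_eq_lintegral_enorm hg.1.restrict
    _ < ε := ENNReal.toReal_lt_of_lt_ofReal h

-- `|g| μ` is a finite measure on a σ-compact metric space, hence inner and outer regular.
section Regularity

variable {E : Type*} [NormedAddCommGroup E] [NormedSpace ℝ E] [FiniteDimensional ℝ E]
  [MeasurableSpace E] [BorelSpace E] {μ : Measure E} {g : E → ℝ}

lemma exists_isCompact_subset_setIntegral_abs_sdiff_lt (hg : Integrable g μ) {A : Set E}
    (hA : MeasurableSet A) {ε : ℝ} (hε : 0 < ε) :
    ∃ K ⊆ A, IsCompact K ∧ ∫ y in A \ K, |g y| ∂μ < ε := by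
  have := isFiniteMeasure_withDensity hg.2.ne
  obtain ⟨K, hKA, hK, hAK⟩ := hA.exists_isCompact_sdiff_lt
    (measure_ne_top (μ.withDensity fun y => ‖g y‖ₑ) A) (ENNReal.ofReal_pos.2 hε).ne'
  exact ⟨K, hKA, hK, setIntegral_abs_lt_of_withDensity_lt hg (hA.diff hK.measurableSet) hAK⟩

lemma exists_isOpen_superset_setIntegral_abs_sdiff_lt (hg : Integrable g μ) {K U : Set E}
    (hK : IsCompact K) (hU : IsOpen U) (hKU : K ⊆ U) {ε : ℝ} (hε : 0 < ε) :
    ∃ V, IsOpen V ∧ K ⊆ V ∧ V ⊆ U ∧ ∫ y in V \ K, |g y| ∂μ < ε := by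
  have := isFiniteMeasure_withDensity hg.2.ne
  obtain ⟨V, hKV, hV, -, hVK⟩ := hK.measurableSet.exists_isOpen_sdiff_lt
    (measure_ne_top (μ.withDensity fun y => ‖g y‖ₑ) K) (ENNReal.ofReal_pos.2 hε).ne'
  refine ⟨V ∩ U, hV.inter hU, subset_inter hKV hKU, inter_subset_right,
    setIntegral_abs_lt_of_withDensity_lt hg ((hV.inter hU).measurableSet.diff hK.measurableSet)
      ((measure_mono (sdiff_subset_sdiff_left inter_subset_left)).trans_lt hVK)⟩

end Regularity

lemma setIntegral_le_integral_mul_add {X : Type*} [MeasurableSpace X] {μ : Measure X}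
    {g η : X → ℝ} (hg : Integrable g μ) (hη : Measurable η) (hη01 : ∀ y, η y ∈ Icc 0 1)
    {A K V : Set X} (hA : MeasurableSet A) (hK : MeasurableSet K) (hV : MeasurableSet V)
    (hKA : K ⊆ A) (hηK : EqOn η 1 K) (hηV : support η ⊆ V) :
    ∫ y in A, g y ∂μ ≤ ∫ y, g y * η y ∂μ + (∫ y in A \ K, |g y| ∂μ + ∫ y in V \ K, |g y| ∂μ) := by
  have hgη : Integrable (fun y => g y * η y) μ :=
    hg.mul_bdd hη.aestronglyMeasurable (c := 1) (Eventually.of_forall fun y => by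
      rw [Real.norm_eq_abs, abs_le]; constructor <;> linarith [(hη01 y).1, (hη01 y).2])
  have hpt : ∀ y, A.indicator g y - g y * η y ≤
      (A \ K).indicator (fun y => |g y|) y + (V \ K).indicator (fun y => |g y|) y := by
    intro y
    obtain ⟨h0, h1⟩ := hη01 y
    have hAK := indicator_nonneg (fun y _ => abs_nonneg (g y)) (s := A \ K) y
    have hVK := indicator_nonneg (fun y _ => abs_nonneg (g y)) (s := V \ K) y
    by_cases hyK : y ∈ K
    · rw [indicator_of_mem (hKA hyK), hηK hyK, Pi.one_apply, mul_one, sub_self]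
      positivity
    by_cases hyA : y ∈ A
    · rw [indicator_of_mem hyA, indicator_of_mem (show y ∈ A \ K from ⟨hyA, hyK⟩)]
      nlinarith [le_abs_self (g y), abs_nonneg (g y)]
    by_cases hyV : y ∈ V
    · rw [indicator_of_notMem hyA, indicator_of_mem (show y ∈ V \ K from ⟨hyV, hyK⟩)]
      nlinarith [neg_abs_le (g y), abs_nonneg (g y)]
    · rw [indicator_of_notMem hyA, notMem_support.1 fun h => hyV (hηV h)]
      linarith
  rw [← integral_indicator hA, ← integral_indicator (hA.diff hK),
    ← integral_indicator (hV.diff hK), ← sub_le_iff_le_add', ← integral_sub (hg.indicator hA) hgη,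
    ← integral_add (hg.abs.indicator (hA.diff hK)) (hg.abs.indicator (hV.diff hK))]
  exact integral_mono ((hg.indicator hA).sub hgη)
    ((hg.abs.indicator (hA.diff hK)).add (hg.abs.indicator (hV.diff hK))) hpt

def IsSmoothSubpartition {E ι : Type*} [NormedAddCommGroup E] [NormedSpace ℝ E] (t : Set E)
    (s : Finset ι) (η : ι → E → ℝ) : Prop :=
  (∀ i ∈ s, ContDiff ℝ 1 (η i) ∧ HasCompactSupport (η i) ∧ tsupport (η i) ⊆ t ∧ ∀ y, 0 ≤ η i y) ∧
    ∀ y, ∑ i ∈ s, η i y ≤ 1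

lemma IsSmoothSubpartition.le_one {E ι : Type*} [NormedAddCommGroup E] [NormedSpace ℝ E]
    {t : Set E} {s : Finset ι} {η : ι → E → ℝ} (hη : IsSmoothSubpartition t s η) {i : ι}
    (hi : i ∈ s) (y : E) : η i y ≤ 1 :=
  (Finset.single_le_sum (fun j hj => (hη.1 j hj).2.2.2 y) hi).trans (hη.2 y)

section Subpartition

variable {E : Type*} [NormedAddCommGroup E] [NormedSpace ℝ E] [FiniteDimensional ℝ E]
  [MeasurableSpace E] [BorelSpace E] {ι : Type*}
  {μ : Measure E} {t : Set E} {g : ι → E → ℝ} {A : ι → Set E}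

lemma exists_isSmoothSubpartition_setIntegral_le (ht : IsOpen t) (hg : ∀ i, Integrable (g i) μ)
    (hA : ∀ i, MeasurableSet (A i)) (hAt : ∀ i, A i ⊆ t) (hAd : Pairwise (Disjoint on A))
    (s : Finset ι) {ε : ℝ} (hε : 0 < ε) :
    ∃ η, IsSmoothSubpartition t s η ∧
      ∀ i ∈ s, ∫ y in A i, g i y ∂μ ≤ ∫ y, g i y * η i y ∂μ + ε := by
  choose K hKA hK hAK using fun i =>
    exists_isCompact_subset_setIntegral_abs_sdiff_lt (hg i) (hA i) (half_pos hε)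
  obtain ⟨W, hW, hKW, hWd⟩ := exists_isOpen_pairwiseDisjoint_of_isCompact hK (s := s)
    fun i _ j _ hij => (hAd hij).mono (hKA i) (hKA j)
  choose V hV hKV hVWt hVK using fun i => exists_isOpen_superset_setIntegral_abs_sdiff_lt (hg i)
    (hK i) ((hW i).inter ht) (subset_inter (hKW i) ((hKA i).trans (hAt i))) (half_pos hε)
  choose η hη hηc hηV hηK hη01 using fun i => exists_contDiff_cutoff (hK i) (hV i) (hKV i)
  have hηVt : ∀ i, tsupport (η i) ⊆ W i ∩ t := fun i => (hηV i).trans (hVWt i)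
  refine ⟨η, ⟨fun i _ => ⟨hη i, hηc i, (hηVt i).trans inter_subset_right, fun y => (hη01 i y).1⟩,
    Finset.sum_le_one_of_pairwiseDisjoint_support (fun i _ y => (hη01 i y).2)
      (hWd.mono fun i => (subset_tsupport _).trans ((hηVt i).trans inter_subset_left))⟩,
    fun i _ => ?_⟩
  have := setIntegral_le_integral_mul_add (hg i) (hη i).continuous.measurable (hη01 i) (hA i)
    (hK i).measurableSet (hV i).measurableSet (hKA i) (hηK i)
    ((subset_tsupport _).trans (hηV i))
  linarith [hAK i, hVK i]

lemma sum_setIntegral_le_of_isSmoothSubpartition (ht : IsOpen t) (hg : ∀ i, Integrable (g i) μ)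
    (hA : ∀ i, MeasurableSet (A i)) (hAt : ∀ i, A i ⊆ t) (hAd : Pairwise (Disjoint on A))
    (s : Finset ι) {B : ℝ}
    (hB : ∀ η, IsSmoothSubpartition t s η → ∑ i ∈ s, ∫ y, g i y * η i y ∂μ ≤ B) :
    ∑ i ∈ s, ∫ y in A i, g i y ∂μ ≤ B := by
  refine le_of_forall_pos_le_add fun ε hε => ?_
  obtain ⟨η, hη, hle⟩ := exists_isSmoothSubpartition_setIntegral_le ht hg hA hAt hAd s
    (ε := ε / (s.card + 1)) (by positivity)
  have hcard : s.card * (ε / (s.card + 1)) ≤ ε := by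
    rw [mul_div_assoc', div_le_iff₀ (by positivity)]
    nlinarith
  calc ∑ i ∈ s, ∫ y in A i, g i y ∂μ ≤ ∑ i ∈ s, (∫ y, g i y * η i y ∂μ + ε / (s.card + 1)) :=
        Finset.sum_le_sum hle
    _ = ∑ i ∈ s, ∫ y, g i y * η i y ∂μ + s.card * (ε / (s.card + 1)) := by
        rw [Finset.sum_add_distrib, Finset.sum_const, nsmul_eq_mul]
    _ ≤ B + ε := add_le_add (hB η hη) hcard

end Subpartition

def posMaxSet {X : Type*} (t : Set X) (g : ℕ → X → ℝ) (s : Finset ℕ) (n : ℕ) : Set X :=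
  {y | n ∈ s ∧ y ∈ t ∧ 0 < g n y ∧ ∀ m ∈ s, g m y ≤ g n y}

section PosMaxSet

variable {X : Type*} {t : Set X} {g : ℕ → X → ℝ} {s : Finset ℕ}

lemma measurableSet_posMaxSet [MeasurableSpace X] (ht : MeasurableSet t)
    (hgm : ∀ n, Measurable (g n)) (n : ℕ) :
    MeasurableSet (posMaxSet t g s n) :=
  measurableSet_setOfPred.2 <| measurable_const.and <| ht.mem.and <|
    (measurableSet_lt measurable_const (hgm n)).mem.and <| Measurable.forall fun m =>
      measurable_const.imp (measurableSet_le (hgm m) (hgm n)).mem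

lemma indicator_disjointed_posMaxSet_nonneg (n : ℕ) (y : X) :
    0 ≤ (disjointed (posMaxSet t g s) n).indicator (g n) y :=
  indicator_nonneg (fun _ hy => (disjointed_subset _ n hy).2.2.1.le) y

lemma biSup_ofReal_le_ofReal_sum_indicator {y : X} (hy : y ∈ t) :
    ⨆ n ∈ s, ENNReal.ofReal (g n y) ≤
      ENNReal.ofReal (∑ n ∈ s, (disjointed (posMaxSet t g s) n).indicator (g n) y) := by
  refine iSup₂_le fun n hn => ?_
  rcases le_or_gt (g n y) 0 with hn0 | hn0
  · rw [ENNReal.ofReal_of_nonpos hn0]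
    exact zero_le
  obtain ⟨k, hk, hmax⟩ := s.exists_max_image (fun m => g m y) ⟨n, hn⟩
  have hyA : y ∈ ⋃ j, disjointed (posMaxSet t g s) j := by
    rw [iUnion_disjointed]
    exact mem_iUnion_of_mem k ⟨hk, hy, hn0.trans_le (hmax n hn), hmax⟩
  obtain ⟨j, hyA⟩ := mem_iUnion.1 hyA
  obtain ⟨hj, -, -, hjmax⟩ := disjointed_subset _ j hyA
  refine ENNReal.ofReal_le_ofReal ((hjmax n hn).trans ?_)
  rw [← indicator_of_mem hyA (g j)]
  exact Finset.single_le_sum (fun m _ => indicator_disjointed_posMaxSet_nonneg m y) hj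

end PosMaxSet

section Duality

variable {E : Type*} [NormedAddCommGroup E] [NormedSpace ℝ E] [FiniteDimensional ℝ E]
  [MeasurableSpace E] [BorelSpace E] {μ : Measure E} {t : Set E} {g : ℕ → E → ℝ}

lemma setLIntegral_biSup_ofReal_le (ht : IsOpen t) (hgm : ∀ n, Measurable (g n))
    (hg : ∀ n, Integrable (g n) μ) (s : Finset ℕ) {B : ℝ}
    (hB : ∀ η, IsSmoothSubpartition t s η → ∑ n ∈ s, ∫ y, g n y * η n y ∂μ ≤ B) :
    ∫⁻ y in t, ⨆ n ∈ s, ENNReal.ofReal (g n y) ∂μ ≤ ENNReal.ofReal B := by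
  set A := disjointed (posMaxSet t g s)
  have hA : ∀ n, MeasurableSet (A n) :=
    MeasurableSet.disjointed (measurableSet_posMaxSet ht.measurableSet hgm)
  set S : E → ℝ := fun y => ∑ n ∈ s, (A n).indicator (g n) y
  have hSi : Integrable S μ := integrable_finsetSum s fun n _ => (hg n).indicator (hA n)
  calc ∫⁻ y in t, ⨆ n ∈ s, ENNReal.ofReal (g n y) ∂μ
      ≤ ∫⁻ y in t, ENNReal.ofReal (S y) ∂μ :=
        setLIntegral_mono' ht.measurableSet fun y => biSup_ofReal_le_ofReal_sum_indicator
    _ ≤ ∫⁻ y, ENNReal.ofReal (S y) ∂μ := setLIntegral_le_lintegral _ _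
    _ = ENNReal.ofReal (∑ n ∈ s, ∫ y in A n, g n y ∂μ) := by
        rw [← ofReal_integral_eq_lintegral_ofReal hSi (Eventually.of_forall fun y =>
          Finset.sum_nonneg fun n _ => indicator_disjointed_posMaxSet_nonneg n y),
          integral_finsetSum s fun n _ => (hg n).indicator (hA n)]
        simp_rw [integral_indicator (hA _)]
    _ ≤ ENNReal.ofReal B := ENNReal.ofReal_le_ofReal <|
        sum_setIntegral_le_of_isSmoothSubpartition ht hg hA
          (fun n y hy => (disjointed_subset _ n hy).2.1) (disjoint_disjointed _) s hB

lemma setLIntegral_iSup_ofReal_le (ht : IsOpen t) (hgm : ∀ n, Measurable (g n))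
    (hg : ∀ n, Integrable (g n) μ) {B : ℝ}
    (hB : ∀ s η, IsSmoothSubpartition t s η → ∑ n ∈ s, ∫ y, g n y * η n y ∂μ ≤ B) :
    ∫⁻ y in t, ⨆ n, ENNReal.ofReal (g n y) ∂μ ≤ ENNReal.ofReal B := by
  simp_rw [iSup_eq_iSup_finset fun n => ENNReal.ofReal (g n _)]
  have hmeas (s : Finset ℕ) : Measurable fun y => ⨆ n ∈ s, ENNReal.ofReal (g n y) :=
    Measurable.biSup _ s.finite_toSet.countable fun n _ => (hgm n).ennreal_ofReal
  rw [lintegral_iSup_directed (fun s => (hmeas s).aemeasurable) ?_]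
  · exact iSup_le fun s => setLIntegral_biSup_ofReal_le ht hgm hg s (hB s)
  · refine Monotone.directed_le ?_
    intro s s' hss' y
    exact biSup_mono fun n hn => Finset.mem_of_subset hss' hn

end Duality

lemma div2_prodMk_zero {φ : ℝ × ℝ → ℝ} {p : ℝ × ℝ} (hφ : DifferentiableAt ℝ φ p) :
    div2 (fun q => (φ q, 0)) p = deriv (fun x => φ (x, p.2)) p.1 := by
  have hΨ : HasFDerivAt (fun q => (φ q, (0 : ℝ))) ((fderiv ℝ φ p).prod 0) p :=
    hφ.hasFDerivAt.prodMk (hasFDerivAt_const _ _)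
  have hline : HasDerivAt (fun x : ℝ => (x, p.2)) ((1 : ℝ), (0 : ℝ)) p.1 :=
    (hasDerivAt_id _).prodMk (hasDerivAt_const _ _)
  have hx := (hφ.hasFDerivAt.comp_hasDerivAt_of_eq p.1 hline rfl).deriv
  rw [Function.comp_def] at hx
  rw [div2, hΨ.fderiv, hx]
  simp

section Rectangle

variable {a b : ℝ} {t : Set ℝ} {s : Finset ℕ} {e η : ℕ → ℝ → ℝ}

lemma isTestVF_sum_mul (he : ∀ n ∈ s, IsTestFun a b (e n)) (hη : IsSmoothSubpartition t s η) :
    IsTestVF (Ioo a b ×ˢ t) fun q => (∑ n ∈ s, e n q.1 * η n q.2, 0) := by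
  set Z := ⋃ n ∈ s, tsupport (e n) ×ˢ tsupport (η n)
  have hZ : IsCompact Z := s.finite_toSet.isCompact_biUnion fun n hn =>
    (he n hn).2.1.prod (hη.1 n hn).2.1
  have hZ0 : ∀ q ∉ Z, (∑ n ∈ s, e n q.1 * η n q.2, (0 : ℝ)) = 0 := by
    intro q hq
    refine Prod.ext (Finset.sum_eq_zero fun n hn => ?_) rfl
    by_cases h1 : q.1 ∈ tsupport (e n)
    · rw [image_eq_zero_of_notMem_tsupport fun h2 => hq (mem_biUnion hn ⟨h1, h2⟩), mul_zero]
    · rw [image_eq_zero_of_notMem_tsupport h1, zero_mul]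
  have hsupp : tsupport (fun q => (∑ n ∈ s, e n q.1 * η n q.2, (0 : ℝ))) ⊆ Z :=
    closure_minimal (fun q hq => not_not.1 fun h => hq (hZ0 q h)) hZ.isClosed
  refine ⟨?_, HasCompactSupport.intro hZ hZ0, hsupp.trans (iUnion₂_subset fun n hn =>
    prod_mono (he n hn).2.2.1 (hη.1 n hn).2.2.1), fun q => ?_⟩
  · exact (ContDiff.sum fun n hn => ((he n hn).1.comp contDiff_fst).mul
      ((hη.1 n hn).1.comp contDiff_snd)).prodMk contDiff_const
  refine norm_prod_le_iff.2 ⟨?_, by simp⟩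
  calc ‖∑ n ∈ s, e n q.1 * η n q.2‖ ≤ ∑ n ∈ s, ‖e n q.1 * η n q.2‖ := norm_sum_le _ _
    _ ≤ ∑ n ∈ s, η n q.2 := Finset.sum_le_sum fun n hn => by
        rw [norm_mul, Real.norm_of_nonneg ((hη.1 n hn).2.2.2 q.2)]
        exact mul_le_of_le_one_left ((hη.1 n hn).2.2.2 q.2) ((he n hn).2.2.2 q.1)
    _ ≤ 1 := hη.2 q.2

lemma div2_sum_mul (he : ∀ n ∈ s, IsTestFun a b (e n)) (hη : IsSmoothSubpartition t s η)
    (p : ℝ × ℝ) :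
    div2 (fun q => (∑ n ∈ s, e n q.1 * η n q.2, 0)) p = ∑ n ∈ s, deriv (e n) p.1 * η n p.2 := by
  rw [div2_prodMk_zero ((isTestVF_sum_mul he hη).1.differentiable one_ne_zero p).fst]
  exact (HasDerivAt.fun_sum fun n hn =>
    (((he n hn).1.differentiable one_ne_zero p.1).hasDerivAt.mul_const (η n p.2))).deriv

lemma integral_mul_div2_sum_mul (he : ∀ n ∈ s, IsTestFun a b (e n))
    (hη : IsSmoothSubpartition t s η) {μ ν : Measure ℝ} [SFinite μ] [SFinite ν] {u : ℝ × ℝ → ℝ}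
    (hu : Integrable u (μ.prod ν)) :
    ∫ p, u p * div2 (fun q => (∑ n ∈ s, e n q.1 * η n q.2, 0)) p ∂(μ.prod ν) =
      ∑ n ∈ s, ∫ y, (∫ x, u (x, y) * deriv (e n) x ∂μ) * η n y ∂ν := by
  have hint : ∀ n ∈ s, Integrable (fun p => u p * deriv (e n) p.1 * η n p.2) (μ.prod ν) :=
    fun n hn => ((he n hn).integrable_mul_deriv_comp hu measurable_fst).mul_comp_of_abs_le
      (hη.1 n hn).1.continuous (C := 1)
      (fun y => abs_le.2 ⟨by linarith [(hη.1 n hn).2.2.2 y], hη.le_one hn y⟩) measurable_snd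
  simp_rw [div2_sum_mul he hη, Finset.mul_sum, ← mul_assoc]
  rw [integral_finsetSum s hint]
  refine Finset.sum_congr rfl fun n hn => ?_
  rw [integral_prod_symm _ (hint n hn)]
  simp_rw [integral_mul_const]

lemma sum_integral_mul_le_TV2 (he : ∀ n ∈ s, IsTestFun a b (e n))
    (hη : IsSmoothSubpartition t s η) {u : ℝ × ℝ → ℝ} (hu : IntegrableOn u (Ioo a b ×ˢ t))
    (huBV : BV2 u (Ioo a b ×ˢ t)) :
    ∑ n ∈ s, ∫ y in t, (∫ x in Ioo a b, u (x, y) * deriv (e n) x) * η n y ≤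
      TV2 u (Ioo a b ×ˢ t) := by
  have hprod : (volume.restrict (Ioo a b)).prod (volume.restrict t) =
      volume.restrict (Ioo a b ×ˢ t) := by
    rw [Measure.prod_restrict, ← Measure.volume_eq_prod]
  rw [← integral_mul_div2_sum_mul he hη (hprod ▸ hu)]
  exact le_csSup huBV ⟨_, isTestVF_sum_mul he hη, by rw [hprod]⟩

end Rectangle

lemma TV2_nonneg {u : ℝ × ℝ → ℝ} {Ω : Set (ℝ × ℝ)} (hu : BV2 u Ω) : 0 ≤ TV2 u Ω :=
  le_csSup hu ⟨0, ⟨contDiff_const, HasCompactSupport.zero, by simp, by simp⟩, by simp [div2]⟩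

lemma integral_integral_mul_deriv_swap {a b : ℝ} {ψ : ℝ → ℝ} (hψ : IsTestFun a b ψ)
    {μ ν : Measure ℝ} [SFinite μ] [SFinite ν] {u : ℝ × ℝ → ℝ} (hu : Integrable u (μ.prod ν)) :
    ∫ x, (∫ y, u (x, y) ∂ν) * deriv ψ x ∂μ = ∫ y, ∫ x, u (x, y) * deriv ψ x ∂μ ∂ν := by
  simp_rw [← integral_mul_const]
  exact integral_integral_swap (hψ.integrable_mul_deriv_comp hu measurable_fst)

lemma integrable_and_integral_le_of_ae_eq_toReal {X : Type*} [MeasurableSpace X] {μ : Measure X}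
    {G : X → ℝ≥0∞} (hG : Measurable G) {C : ℝ} (hC : 0 ≤ C) (hGC : ∫⁻ y, G y ∂μ ≤ ENNReal.ofReal C)
    {F : X → ℝ} (hF : F =ᵐ[μ] fun y => (G y).toReal) : Integrable F μ ∧ ∫ y, F y ∂μ ≤ C := by
  have hfin : ∫⁻ y, G y ∂μ ≠ ∞ := ne_top_of_le_ne_top ENNReal.ofReal_ne_top hGC
  refine ⟨(integrable_toReal_of_lintegral_ne_top hG.aemeasurable hfin).congr hF.symm, ?_⟩
  rw [integral_congr_ae hF, integral_toReal hG.aemeasurable (ae_lt_top hG hfin)]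
  exact ENNReal.toReal_le_of_le_ofReal hC hGC

lemma exists_ae_TV1_slice_eq_toReal {a b : ℝ} {t : Set ℝ} (ht : IsOpen t) {u : ℝ × ℝ → ℝ}
    (hu : IntegrableOn u (Ioo a b ×ˢ t)) (huBV : BV2 u (Ioo a b ×ˢ t)) :
    ∃ G : ℝ → ℝ≥0∞, Measurable G ∧ ∫⁻ y in t, G y ≤ ENNReal.ofReal (TV2 u (Ioo a b ×ˢ t)) ∧
      ∀ᵐ y ∂(volume.restrict t),
        BV1 (fun x => u (x, y)) a b ∧ TV1 (fun x => u (x, y)) a b = (G y).toReal := by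
  set μ := volume.restrict (Ioo a b)
  set ν := volume.restrict t
  have hu' : Integrable u (μ.prod ν) := by rwa [Measure.prod_restrict, ← Measure.volume_eq_prod]
  obtain ⟨e, he, hdense⟩ := exists_seq_isTestFun_dense a b
  have hT : ∀ n, Integrable (fun y => ∫ x, u (x, y) * deriv (e n) x ∂μ) ν :=
    fun n => ((he n).integrable_mul_deriv_comp hu' measurable_fst).integral_prod_right
  choose g hgm hgT using fun n => (hT n).1.aemeasurable
  have hB : ∀ s η, IsSmoothSubpartition t s η →
      ∑ n ∈ s, ∫ y, g n y * η n y ∂ν ≤ TV2 u (Ioo a b ×ˢ t) := by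
    intro s η hη
    convert sum_integral_mul_le_TV2 (fun n _ => he n) hη hu huBV using 2 with n
    exact integral_congr_ae ((hgT n).mono fun y hy => congrArg (· * η n y) hy.symm)
  set G := fun y => ⨆ n, ENNReal.ofReal (g n y)
  have hGm : Measurable G := Measurable.iSup fun n => (hgm n).ennreal_ofReal
  have hG : ∫⁻ y in t, G y ≤ ENNReal.ofReal (TV2 u (Ioo a b ×ˢ t)) := by
    simpa only [ν, Measure.restrict_restrict ht.measurableSet, inter_self] using
      setLIntegral_iSup_ofReal_le ht hgm (fun n => (hT n).congr (hgT n)) hB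
  refine ⟨G, hGm, hG, ?_⟩
  filter_upwards [hu'.prod_left_ae, ae_all_iff.2 hgT,
    ae_lt_top hGm (ne_top_of_le_ne_top ENNReal.ofReal_ne_top hG)] with y hy hgy hGy
  have hGy' : G y = ⨆ n, ENNReal.ofReal (∫ x, u (x, y) * deriv (e n) x ∂μ) := by
    simp only [G, hgy]
  rw [BV1_iff_bddAbove, TV1_eq_sSup, hGy']
  exact bddAbove_and_sSup_eq_toReal_iSup_ofReal (zero_mem_testIntegrals _ _ _)
    (fun n => ⟨e n, he n, rfl⟩) (fun c hc => mem_upperBounds_testIntegrals he hdense hy hc)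
    (hGy' ▸ hGy.ne)

theorem stmt2_general (ax bx ay bY : ℝ)
    (Ω : Set (ℝ × ℝ)) (hΩ : Ω = Ioo ax bx ×ˢ Ioo ay bY)
    (u : ℝ × ℝ → ℝ) (hu1 : IntegrableOn u Ω) (huBV : BV2 u Ω)
    (v : ℝ → ℝ) (hv : ∀ x, v x = ∫ y in Ioo ay bY, u (x, y)) :
    IntegrableOn v (Ioo ax bx) ∧ BV1 v ax bx ∧
    TV1 v ax bx ≤ ∫ y in Ioo ay bY, TV1 (fun x => u (x, y)) ax bx ∧
    (∫ y in Ioo ay bY, TV1 (fun x => u (x, y)) ax bx) ≤ TV2 u Ω := by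
  subst hΩ
  have hu : Integrable u ((volume.restrict (Ioo ax bx)).prod (volume.restrict (Ioo ay bY))) := by
    rwa [Measure.prod_restrict, ← Measure.volume_eq_prod]
  obtain ⟨G, hGm, hG, hslice⟩ := exists_ae_TV1_slice_eq_toReal isOpen_Ioo hu1 huBV
  obtain ⟨hTVi, hTVle⟩ := integrable_and_integral_le_of_ae_eq_toReal hGm (TV2_nonneg huBV) hG
    (hslice.mono fun y hy => hy.2)
  have hvub : ∫ y in Ioo ay bY, TV1 (fun x => u (x, y)) ax bx ∈
      upperBounds (testIntegrals v ax bx) := by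
    rintro _ ⟨ψ, hψ, rfl⟩
    simp only [hv, integral_integral_mul_deriv_swap hψ hu]
    refine integral_mono_ae ((hψ.integrable_mul_deriv_comp hu measurable_fst).integral_prod_right)
      hTVi (hslice.mono fun y hy => ?_)
    dsimp only
    rw [TV1_eq_sSup]
    exact le_csSup ((BV1_iff_bddAbove _ _ _).1 hy.1) ⟨ψ, hψ, rfl⟩
  refine ⟨hu.integral_prod_left.congr (Eventually.of_forall fun x => (hv x).symm),
    (BV1_iff_bddAbove _ _ _).2 ⟨_, hvub⟩,
    (TV1_eq_sSup _ _ _).trans_le (csSup_le ⟨0, zero_mem_testIntegrals _ _ _⟩ hvub), hTVle⟩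

/-- For `u ∈ L¹ ∩ BV` on the rectangle `Ω = (ax, bx) × (ay, by)`, the slice-integrated
function `v(x) = ∫ u(x, y) dy` is in `L¹ ∩ BV(ax, bx)` and
`TV(v) ≤ ∫ TV(u(·,y)) dy ≤ TV(u, Ω)`. -/
theorem stmt2 (ax bx ay bY : ℝ) (hx : ax < bx) (hy : ay < bY)
    (Ω : Set (ℝ × ℝ)) (hΩ : Ω = Ioo ax bx ×ˢ Ioo ay bY)
    (u : ℝ × ℝ → ℝ) (hu1 : IntegrableOn u Ω) (huBV : BV2 u Ω)
    (v : ℝ → ℝ) (hv : ∀ x, v x = ∫ y in Ioo ay bY, u (x, y)) :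
    IntegrableOn v (Ioo ax bx) ∧ BV1 v ax bx ∧
    TV1 v ax bx ≤ ∫ y in Ioo ay bY, TV1 (fun x => u (x, y)) ax bx ∧
    (∫ y in Ioo ay bY, TV1 (fun x => u (x, y)) ax bx) ≤ TV2 u Ω :=
  stmt2_general ax bx ay bY Ω hΩ u hu1 huBV v hv
end

section
/- Let Ω = (a_x, b_x) × (a_y, b_y) ⊂ ℝ² and u ∈ L^1(Ω) ∩ BV(Ω). Then the function v(x) = ∫_{a_y}^{b_y} u(x,y) dy belongs to L^∞(a_x, b_x). -/
open MeasureTheory Set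

/-!
Testing the bound `M` on `∫ u div ψ` against the fields `ψ = (φ(x) η(y), 0)`, with cutoffs
`η → 1` on `(ay, bY)`, and applying Fubini gives `∫ v φ' ≤ M` for every `C¹` function `φ` with
`|φ| ≤ 1` compactly supported in `(ax, bx)`. For `φ` the difference of two smooth steps, rising
from 0 to 1 on `[z₁, z₁ + ε]` and on `[z₂, z₂ + ε]`, this reads `v_ε(z₁) - v_ε(z₂) ≤ M` for a
one-sided mollification `v_ε` of `v`. At Lebesgue points `v_ε → v`, so the essential oscillation
of `v` is at most `M`.
-/

open Filter Topology

noncomputable def smoothStep (z ε t : ℝ) : ℝ := Real.smoothTransition ((t - z) / ε)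

lemma Real.smoothTransition.deriv_eq_zero {x : ℝ} (hx : x ≤ 0 ∨ 1 ≤ x) :
    deriv Real.smoothTransition x = 0 := by
  rcases hx with hx | hx
  · refine IsLocalMin.deriv_eq_zero (Eventually.of_forall fun y => ?_)
    rw [zero_of_nonpos hx]
    exact nonneg y
  · refine IsLocalMax.deriv_eq_zero (Eventually.of_forall fun y => ?_)
    rw [one_of_one_le hx]
    exact le_one y

section SmoothStep

variable {z ε t : ℝ}

lemma smoothStep_of_le (hε : 0 < ε) (ht : t ≤ z) : smoothStep z ε t = 0 :=
  Real.smoothTransition.zero_of_nonpos (div_nonpos_of_nonpos_of_nonneg (by linarith) hε.le)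

lemma smoothStep_of_add_le (hε : 0 < ε) (ht : z + ε ≤ t) : smoothStep z ε t = 1 :=
  Real.smoothTransition.one_of_one_le ((one_le_div hε).2 (by linarith))

lemma smoothStep_mem_Icc : smoothStep z ε t ∈ Icc 0 1 :=
  ⟨Real.smoothTransition.nonneg _, Real.smoothTransition.le_one _⟩

lemma contDiff_smoothStep {n : ℕ∞} : ContDiff ℝ n (smoothStep z ε) :=
  Real.smoothTransition.contDiff.comp (by fun_prop)

lemma continuous_deriv_smoothStep : Continuous (deriv (smoothStep z ε)) :=
  (contDiff_smoothStep (n := 1)).continuous_deriv le_rfl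

lemma deriv_smoothStep :
    deriv (smoothStep z ε) t = deriv Real.smoothTransition ((t - z) / ε) / ε := by
  have hlin : HasDerivAt (fun t => (t - z) / ε) (1 / ε) t :=
    ((hasDerivAt_id t).sub_const z).div_const ε
  have hS := (Real.smoothTransition.contDiff (n := 1)).differentiable one_ne_zero ((t - z) / ε)
  exact (hS.hasDerivAt.comp t hlin).deriv.trans (mul_one_div _ _)

lemma deriv_smoothStep_of_notMem (hε : 0 < ε) (ht : t ∉ Ioo z (z + ε)) :
    deriv (smoothStep z ε) t = 0 := by
  rw [deriv_smoothStep, Real.smoothTransition.deriv_eq_zero, zero_div]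
  rw [mem_Ioo, not_and_or, not_lt, not_lt] at ht
  refine ht.imp (fun ht => div_nonpos_of_nonpos_of_nonneg (by linarith) hε.le)
    (fun ht => (one_le_div hε).2 (by linarith))

lemma exists_abs_deriv_smoothStep_le :
    ∃ K, ∀ z ε t : ℝ, 0 < ε → |deriv (smoothStep z ε) t| ≤ K / ε := by
  have hsupp : Function.support (deriv Real.smoothTransition) ⊆ Icc 0 1 := fun x hx => by
    by_contra h
    rw [mem_Icc, not_and_or, not_le, not_le] at h
    exact hx (Real.smoothTransition.deriv_eq_zero (h.imp le_of_lt le_of_lt))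
  obtain ⟨K, hK⟩ := (HasCompactSupport.of_support_subset_isCompact isCompact_Icc hsupp)
    |>.exists_bound_of_continuous
      ((Real.smoothTransition.contDiff (n := 1)).continuous_deriv le_rfl)
  refine ⟨K, fun z ε t hε => ?_⟩
  rw [deriv_smoothStep, abs_div, abs_of_pos hε]
  exact div_le_div_of_nonneg_right (hK _) hε.le

lemma integral_deriv_smoothStep (hε : 0 < ε) : ∫ t, deriv (smoothStep z ε) t = 1 := by
  rw [← setIntegral_eq_integral_of_forall_compl_eq_zero (s := Ioc z (z + ε))
      fun t ht => deriv_smoothStep_of_notMem hε fun h => ht (Ioo_subset_Ioc_self h),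
    ← intervalIntegral.integral_of_le (by linarith),
    intervalIntegral.integral_deriv_eq_sub
      (fun t _ => (contDiff_smoothStep (n := 1)).differentiable one_ne_zero t)
      (continuous_deriv_smoothStep.intervalIntegrable _ _),
    smoothStep_of_add_le hε le_rfl, smoothStep_of_le hε le_rfl, sub_zero]

lemma integrable_deriv_smoothStep_mul {w : ℝ → ℝ} (hε : 0 < ε) (hw : Integrable w) :
    Integrable (fun t => deriv (smoothStep z ε) t * w t) := by
  obtain ⟨K, hK⟩ := exists_abs_deriv_smoothStep_le
  exact hw.bdd_mul continuous_deriv_smoothStep.aestronglyMeasurable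
    (ae_of_all _ fun t => hK z ε t hε)

end SmoothStep

lemma abs_integral_mul_sub_le_average {k w : ℝ → ℝ} {z ε C : ℝ} (hε : 0 < ε)
    (hk : Integrable k) (hk_zero : ∀ t ∉ Metric.closedBall z ε, k t = 0)
    (hk_le : ∀ t, |k t| ≤ C / ε) (hk_one : ∫ t, k t = 1) (hw : Integrable w) :
    |(∫ t, k t * w t) - w z| ≤ 2 * C * ⨍ t in Metric.closedBall z ε, ‖w t - w z‖ := by
  have hkw : Integrable (fun t => k t * w t) :=
    hw.bdd_mul hk.aestronglyMeasurable (ae_of_all _ hk_le)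
  have hdom : IntegrableOn (fun t => C / ε * ‖w t - w z‖) (Metric.closedBall z ε) :=
    ((hw.integrableOn.sub (integrableOn_const measure_closedBall_lt_top.ne)).norm).const_mul _
  calc |(∫ t, k t * w t) - w z| = ‖∫ t in Metric.closedBall z ε, k t * (w t - w z)‖ := by
        rw [setIntegral_eq_integral_of_forall_compl_eq_zero fun t ht => by simp [hk_zero t ht],
          Real.norm_eq_abs]
        simp only [mul_sub]
        rw [integral_sub hkw (hk.mul_const _), integral_mul_const, hk_one, one_mul]
    _ ≤ ∫ t in Metric.closedBall z ε, C / ε * ‖w t - w z‖ :=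
        norm_integral_le_of_norm_le hdom (ae_of_all _ fun t => by
          rw [norm_mul, Real.norm_eq_abs]
          exact mul_le_mul_of_nonneg_right (hk_le t) (norm_nonneg _))
    _ = 2 * C * ⨍ t in Metric.closedBall z ε, ‖w t - w z‖ := by
        rw [integral_const_mul, setAverage_eq, Real.volume_real_closedBall hε.le, smul_eq_mul]
        field_simp

lemma ae_tendsto_integral_deriv_smoothStep_mul {w : ℝ → ℝ} (hw : Integrable w) :
    ∀ᵐ z, Tendsto (fun ε => ∫ t, deriv (smoothStep z ε) t * w t) (𝓝[>] 0) (𝓝 (w z)) := by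
  obtain ⟨K, hK⟩ := exists_abs_deriv_smoothStep_le
  filter_upwards [IsUnifLocDoublingMeasure.ae_tendsto_average_norm_sub volume
    hw.locallyIntegrable 1] with z hz
  have havg := hz (fun _ => z) id tendsto_id
    (eventually_mem_nhdsWithin.mono fun ε hε => by simpa using le_of_lt hε)
  rw [tendsto_iff_norm_sub_tendsto_zero]
  refine squeeze_zero' (Eventually.of_forall fun _ => norm_nonneg _) ?_
    (by simpa using havg.const_mul (2 * K))
  filter_upwards [self_mem_nhdsWithin] with ε hε
  refine abs_integral_mul_sub_le_average hε
    (continuous_deriv_smoothStep.integrable_of_hasCompactSupport ?_) (fun t ht => ?_)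
    (hK z ε · hε) (integral_deriv_smoothStep hε) hw
  · exact HasCompactSupport.of_support_subset_isCompact isCompact_Icc fun t ht =>
      by_contra fun h => ht (deriv_smoothStep_of_notMem hε fun h' => h (Ioo_subset_Icc_self h'))
  · refine deriv_smoothStep_of_notMem hε fun h => ht ?_
    rw [Metric.mem_closedBall, Real.dist_eq, abs_le]
    constructor <;> linarith [h.1, h.2]

def IsTestFn (I : Set ℝ) (φ : ℝ → ℝ) : Prop :=
  ContDiff ℝ 1 φ ∧ tsupport φ ⊆ I ∧ ∀ t, |φ t| ≤ 1

lemma IsTestFn.hasCompactSupport {a b : ℝ} {φ : ℝ → ℝ} (hφ : IsTestFn (Ioo a b) φ) :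
    HasCompactSupport φ :=
  isCompact_Icc.of_isClosed_subset (isClosed_tsupport φ) (hφ.2.1.trans Ioo_subset_Icc_self)

lemma isTestFn_smoothStep_sub {a b z₁ z₂ ε : ℝ} (hε : 0 < ε) (h₁ : z₁ ∈ Ioo a (b - ε))
    (h₂ : z₂ ∈ Ioo a (b - ε)) : IsTestFn (Ioo a b) (smoothStep z₁ ε - smoothStep z₂ ε) := by
  have hsupp : Function.support (smoothStep z₁ ε - smoothStep z₂ ε)
      ⊆ Icc (min z₁ z₂) (max z₁ z₂ + ε) := fun t ht => by
    by_contra h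
    rw [mem_Icc, not_and_or, not_le, not_le] at h
    refine ht ?_
    rcases h with h | h
    · rw [Pi.sub_apply, smoothStep_of_le hε (h.trans_le (min_le_left _ _)).le,
        smoothStep_of_le hε (h.trans_le (min_le_right _ _)).le, sub_self]
    · rw [Pi.sub_apply, smoothStep_of_add_le hε (by linarith [le_max_left z₁ z₂]),
        smoothStep_of_add_le hε (by linarith [le_max_right z₁ z₂]), sub_self]
  refine ⟨contDiff_smoothStep.sub contDiff_smoothStep,
    (closure_minimal hsupp isClosed_Icc).trans fun t ht => ?_, fun t => ?_⟩
  · have := lt_min h₁.1 h₂.1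
    have := max_lt h₁.2 h₂.2
    exact ⟨by linarith [ht.1], by linarith [ht.2]⟩
  · have := smoothStep_mem_Icc (z := z₁) (ε := ε) (t := t)
    have := smoothStep_mem_Icc (z := z₂) (ε := ε) (t := t)
    simp only [Pi.sub_apply, abs_le, mem_Icc] at *
    constructor <;> linarith

section OneDim

variable {a b M : ℝ} {w : ℝ → ℝ}

lemma integral_deriv_smoothStep_mul_indicator_sub_le (hw : IntegrableOn w (Ioo a b))
    (hM : ∀ φ, IsTestFn (Ioo a b) φ → ∫ t in Ioo a b, w t * deriv φ t ≤ M)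
    {z₁ z₂ ε : ℝ} (hε : 0 < ε) (h₁ : z₁ ∈ Ioo a (b - ε)) (h₂ : z₂ ∈ Ioo a (b - ε)) :
    (∫ t, deriv (smoothStep z₁ ε) t * (Ioo a b).indicator w t)
      - ∫ t, deriv (smoothStep z₂ ε) t * (Ioo a b).indicator w t ≤ M := by
  have hW : Integrable ((Ioo a b).indicator w) := (integrable_indicator_iff measurableSet_Ioo).2 hw
  have hdiff : ∀ z t, DifferentiableAt ℝ (smoothStep z ε) t := fun z t =>
    (contDiff_smoothStep (n := 1)).differentiable one_ne_zero t
  calc _ = ∫ t, (Ioo a b).indicator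
          (fun t => w t * deriv (smoothStep z₁ ε - smoothStep z₂ ε) t) t := by
        rw [← integral_sub (integrable_deriv_smoothStep_mul hε hW)
          (integrable_deriv_smoothStep_mul hε hW)]
        congr 1 with t
        rw [indicator_mul_left, deriv_sub (hdiff z₁ t) (hdiff z₂ t)]
        ring
    _ = ∫ t in Ioo a b, w t * deriv (smoothStep z₁ ε - smoothStep z₂ ε) t :=
        integral_indicator measurableSet_Ioo
    _ ≤ M := hM _ (isTestFn_smoothStep_sub hε h₁ h₂)

lemma sub_le_of_integral_mul_deriv_le (hw : IntegrableOn w (Ioo a b))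
    (hM : ∀ φ, IsTestFn (Ioo a b) φ → ∫ t in Ioo a b, w t * deriv φ t ≤ M)
    {z₁ z₂ : ℝ} (h₁ : z₁ ∈ Ioo a b) (h₂ : z₂ ∈ Ioo a b)
    (hz₁ : Tendsto (fun ε => ∫ t, deriv (smoothStep z₁ ε) t * (Ioo a b).indicator w t)
      (𝓝[>] 0) (𝓝 (w z₁)))
    (hz₂ : Tendsto (fun ε => ∫ t, deriv (smoothStep z₂ ε) t * (Ioo a b).indicator w t)
      (𝓝[>] 0) (𝓝 (w z₂))) :
    w z₁ - w z₂ ≤ M := by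
  refine le_of_tendsto (hz₁.sub hz₂) ?_
  filter_upwards [Ioo_mem_nhdsGT (lt_min (sub_pos.2 h₁.2) (sub_pos.2 h₂.2))] with ε hε
  have := min_le_left (b - z₁) (b - z₂)
  have := min_le_right (b - z₁) (b - z₂)
  exact integral_deriv_smoothStep_mul_indicator_sub_le hw hM hε.1
    ⟨h₁.1, by linarith [hε.2]⟩ ⟨h₂.1, by linarith [hε.2]⟩

theorem memLp_top_of_integral_mul_deriv_le (hw : IntegrableOn w (Ioo a b))
    (hM : ∀ φ, IsTestFn (Ioo a b) φ → ∫ t in Ioo a b, w t * deriv φ t ≤ M) :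
    MemLp w ⊤ (volume.restrict (Ioo a b)) := by
  rcases eq_or_ne (volume.restrict (Ioo a b)) 0 with hμ | hμ
  · rw [hμ]
    exact memLp_measure_zero
  have hgood : ∀ᵐ z ∂volume.restrict (Ioo a b), z ∈ Ioo a b ∧
      Tendsto (fun ε => ∫ t, deriv (smoothStep z ε) t * (Ioo a b).indicator w t)
        (𝓝[>] 0) (𝓝 (w z)) := by
    filter_upwards [ae_restrict_mem measurableSet_Ioo, ae_restrict_of_ae
      (ae_tendsto_integral_deriv_smoothStep_mul
        ((integrable_indicator_iff measurableSet_Ioo).2 hw))] with z hz hlim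
    exact ⟨hz, by rwa [indicator_of_mem hz] at hlim⟩
  have := ae_neBot.2 hμ
  obtain ⟨c, hc, hc_lim⟩ := hgood.exists
  refine memLp_top_of_bound hw.aestronglyMeasurable (|w c| + M) ?_
  filter_upwards [hgood] with z ⟨hz, hz_lim⟩
  have hosc : |w z - w c| ≤ M := abs_sub_le_iff.2
    ⟨sub_le_of_integral_mul_deriv_le hw hM hz hc hz_lim hc_lim,
      sub_le_of_integral_mul_deriv_le hw hM hc hz hc_lim hz_lim⟩
  calc ‖w z‖ = |w c + (w z - w c)| := by rw [Real.norm_eq_abs, add_sub_cancel]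
    _ ≤ |w c| + M := (abs_add_le _ _).trans (add_le_add_right hosc _)

end OneDim

-- A cutoff rising on `[c + δ, c + 2δ]` and falling on `[d - 2δ, d - δ]`.
lemma tendsto_smoothStep_sub_nhdsGT {c d y : ℝ} (hy : y ∈ Ioo c d) :
    Tendsto (fun δ => (smoothStep (c + δ) δ - smoothStep (d - 2 * δ) δ) y) (𝓝[>] 0) (𝓝 1) := by
  refine tendsto_const_nhds.congr' (EventuallyEq.symm ?_)
  filter_upwards [Ioo_mem_nhdsGT (half_pos (lt_min (sub_pos.2 hy.1) (sub_pos.2 hy.2)))]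
    with δ hδ
  have := min_le_left (y - c) (d - y)
  have := min_le_right (y - c) (d - y)
  rw [Pi.sub_apply, smoothStep_of_add_le hδ.1 (by linarith [hδ.2]),
    smoothStep_of_le hδ.1 (by linarith [hδ.2]), sub_zero]

lemma eventually_isTestFn_smoothStep_sub {c d : ℝ} (hcd : c < d) :
    ∀ᶠ δ in 𝓝[>] 0, IsTestFn (Ioo c d) (smoothStep (c + δ) δ - smoothStep (d - 2 * δ) δ) := by
  filter_upwards [Ioo_mem_nhdsGT (half_pos (sub_pos.2 hcd))] with δ hδ
  exact isTestFn_smoothStep_sub hδ.1 ⟨by linarith [hδ.1], by linarith [hδ.2]⟩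
    ⟨by linarith [hδ.2], by linarith [hδ.1]⟩

lemma div2_fst_mul_snd {φ η : ℝ → ℝ} (hφ : Differentiable ℝ φ) (hη : Differentiable ℝ η)
    (p : ℝ × ℝ) : div2 (fun q => (φ q.1 * η q.2, 0)) p = deriv φ p.1 * η p.2 := by
  have hφ' : HasFDerivAt (fun q : ℝ × ℝ => φ q.1) (deriv φ p.1 • ContinuousLinearMap.fst ℝ ℝ ℝ) p :=
    (hφ p.1).hasDerivAt.comp_hasFDerivAt p hasFDerivAt_fst
  have hη' : HasFDerivAt (fun q : ℝ × ℝ => η q.2) (deriv η p.2 • ContinuousLinearMap.snd ℝ ℝ ℝ) p :=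
    (hη p.2).hasDerivAt.comp_hasFDerivAt p hasFDerivAt_snd
  rw [div2, ((hφ'.fun_mul hη').prodMk (hasFDerivAt_const 0 p)).fderiv]
  simp only [ContinuousLinearMap.prod_apply, add_apply, smul_apply, ContinuousLinearMap.coe_fst',
    ContinuousLinearMap.coe_snd', zero_apply, smul_eq_mul, mul_zero, mul_one, zero_add, add_zero]
  ring

lemma isTestVF_fst_mul_snd {a b c d : ℝ} {φ η : ℝ → ℝ} (hφ : IsTestFn (Ioo a b) φ)
    (hη : IsTestFn (Ioo c d) η) :
    IsTestVF (Ioo a b ×ˢ Ioo c d) (fun q => (φ q.1 * η q.2, 0)) := by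
  have hts : tsupport (fun q : ℝ × ℝ => (φ q.1 * η q.2, (0 : ℝ))) ⊆ tsupport φ ×ˢ tsupport η := by
    rw [tsupport, tsupport, tsupport, ← closure_prod_eq]
    refine closure_mono fun q hq => ?_
    have : φ q.1 * η q.2 ≠ 0 := fun h => hq (by simp [h])
    exact ⟨left_ne_zero_of_mul this, right_ne_zero_of_mul this⟩
  refine ⟨((hφ.1.comp contDiff_fst).mul (hη.1.comp contDiff_snd)).prodMk contDiff_const,
    (hφ.hasCompactSupport.prod hη.hasCompactSupport).of_isClosed_subset (isClosed_tsupport _) hts,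
    hts.trans (prod_mono hφ.2.1 hη.2.1), fun q => ?_⟩
  rw [Prod.norm_def, norm_zero, Real.norm_eq_abs, abs_mul]
  exact max_le (mul_le_one₀ (hφ.2.2 q.1) (abs_nonneg _) (hη.2.2 q.2)) zero_le_one

section Fubini

variable {α β : Type*} [MeasurableSpace α] [MeasurableSpace β] {μ : Measure α} {ν : Measure β}
  [SFinite μ] [SFinite ν] {s : Set α} {t : Set β} {u : α × β → ℝ}

lemma IntegrableOn.setIntegral_prod_left (hu : IntegrableOn u (s ×ˢ t) (μ.prod ν)) :
    IntegrableOn (fun x => ∫ y in t, u (x, y) ∂ν) s μ := by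
  rw [IntegrableOn, ← Measure.prod_restrict] at hu
  exact hu.integral_prod_left

lemma setIntegral_prod_mul_fst {f : α → ℝ} {C : ℝ} (hu : IntegrableOn u (s ×ˢ t) (μ.prod ν))
    (hf : StronglyMeasurable f) (hC : ∀ x, ‖f x‖ ≤ C) :
    ∫ p in s ×ˢ t, u p * f p.1 ∂μ.prod ν = ∫ x in s, (∫ y in t, u (x, y) ∂ν) * f x ∂μ := by
  rw [IntegrableOn, ← Measure.prod_restrict] at hu
  have huf : Integrable (fun p => u p * f p.1) ((μ.restrict s).prod (ν.restrict t)) :=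
    hu.mul_bdd (hf.comp_measurable measurable_fst).aestronglyMeasurable
      (ae_of_all _ fun p => hC p.1)
  rw [← Measure.prod_restrict, integral_prod _ huf]
  simp_rw [integral_mul_const]

end Fubini

lemma tendsto_setIntegral_mul_fst_mul_snd {ι : Type*} {l : Filter ι} [l.IsCountablyGenerated]
    {s t : Set ℝ} (hs : MeasurableSet s) (ht : MeasurableSet t) {u : ℝ × ℝ → ℝ} {f : ℝ → ℝ}
    {η : ι → ℝ → ℝ} {C : ℝ} (hu : IntegrableOn u (s ×ˢ t)) (hf : Continuous f)
    (hC : ∀ x, ‖f x‖ ≤ C) (hη : ∀ i, Continuous (η i)) (hη_le : ∀ᶠ i in l, ∀ y, |η i y| ≤ 1)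
    (hη_lim : ∀ y ∈ t, Tendsto (η · y) l (𝓝 1)) :
    Tendsto (fun i => ∫ p in s ×ˢ t, u p * (f p.1 * η i p.2)) l
      (𝓝 (∫ p in s ×ˢ t, u p * f p.1)) := by
  refine tendsto_integral_filter_of_dominated_convergence (fun p => ‖u p‖ * C)
    (Eventually.of_forall fun i => hu.aestronglyMeasurable.mul
      ((hf.comp continuous_fst).mul ((hη i).comp continuous_snd)).aestronglyMeasurable)
    ?_ (hu.norm.mul_const C) ?_
  · filter_upwards [hη_le] with i hi
    refine ae_of_all _ fun p => ?_
    calc ‖u p * (f p.1 * η i p.2)‖ = ‖u p‖ * (‖f p.1‖ * |η i p.2|) := by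
          rw [norm_mul, norm_mul, Real.norm_eq_abs (η i p.2)]
      _ ≤ ‖u p‖ * (C * 1) := by
          gcongr
          exacts [(norm_nonneg _).trans (hC 0), hC _, hi _]
      _ = ‖u p‖ * C := by rw [mul_one]
  · filter_upwards [ae_restrict_mem (hs.prod ht)] with p hp
    simpa using ((hη_lim p.2 hp.2).const_mul (f p.1)).const_mul (u p)

lemma integral_slice_mul_deriv_le {ax bx ay bY M : ℝ} (hy : ay < bY) {u : ℝ × ℝ → ℝ}
    (hu : IntegrableOn u (Ioo ax bx ×ˢ Ioo ay bY))
    (hM : ∀ ψ, IsTestVF (Ioo ax bx ×ˢ Ioo ay bY) ψ →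
      ∫ p in Ioo ax bx ×ˢ Ioo ay bY, u p * div2 ψ p ≤ M)
    {φ : ℝ → ℝ} (hφ : IsTestFn (Ioo ax bx) φ) :
    ∫ x in Ioo ax bx, (∫ y in Ioo ay bY, u (x, y)) * deriv φ x ≤ M := by
  set η : ℝ → ℝ → ℝ := fun δ => smoothStep (ay + δ) δ - smoothStep (bY - 2 * δ) δ
  have hη : ∀ δ, ContDiff ℝ 1 (η δ) := fun δ => contDiff_smoothStep.sub contDiff_smoothStep
  have hφ' : Continuous (deriv φ) := hφ.1.continuous_deriv le_rfl
  obtain ⟨C, hC⟩ := hφ.hasCompactSupport.deriv.exists_bound_of_continuous hφ'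
  have hlim := tendsto_setIntegral_mul_fst_mul_snd measurableSet_Ioo measurableSet_Ioo hu hφ' hC
    (fun δ => (hη δ).continuous)
    ((eventually_isTestFn_smoothStep_sub hy).mono fun δ hδ => hδ.2.2)
    fun y hy => tendsto_smoothStep_sub_nhdsGT hy
  rw [← setIntegral_prod_mul_fst hu hφ'.stronglyMeasurable hC]
  refine le_of_tendsto hlim ?_
  filter_upwards [eventually_isTestFn_smoothStep_sub hy] with δ (hδ : IsTestFn _ (η δ))
  have hdiv :=
    div2_fst_mul_snd (hφ.1.differentiable one_ne_zero) ((hη δ).differentiable one_ne_zero)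
  simpa only [hdiv] using hM _ (isTestVF_fst_mul_snd hφ hδ)

theorem stmt3_general (ax bx ay bY : ℝ) (hy : ay < bY)
    (Ω : Set (ℝ × ℝ)) (hΩ : Ω = Ioo ax bx ×ˢ Ioo ay bY)
    (u : ℝ × ℝ → ℝ) (hu1 : IntegrableOn u Ω) (huBV : BV2 u Ω)
    (v : ℝ → ℝ) (hv : ∀ x, v x = ∫ y in Ioo ay bY, u (x, y)) :
    MemLp v ⊤ (volume.restrict (Ioo ax bx)) := by
  subst hΩ
  obtain ⟨M, hM⟩ := huBV
  obtain rfl : v = fun x => ∫ y in Ioo ay bY, u (x, y) := funext hv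
  exact memLp_top_of_integral_mul_deriv_le (IntegrableOn.setIntegral_prod_left hu1) fun φ hφ =>
    integral_slice_mul_deriv_le hy hu1 (fun ψ hψ => hM ⟨ψ, hψ, rfl⟩) hφ

/-- For `u ∈ L¹ ∩ BV` on the rectangle `Ω = (ax, bx) × (ay, by)`, the slice-integrated
function `v(x) = ∫ u(x, y) dy` is essentially bounded on `(ax, bx)`. -/
theorem stmt3 (ax bx ay bY : ℝ) (hx : ax < bx) (hy : ay < bY)
    (Ω : Set (ℝ × ℝ)) (hΩ : Ω = Ioo ax bx ×ˢ Ioo ay bY)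
    (u : ℝ × ℝ → ℝ) (hu1 : IntegrableOn u Ω) (huBV : BV2 u Ω)
    (v : ℝ → ℝ) (hv : ∀ x, v x = ∫ y in Ioo ay bY, u (x, y)) :
    MemLp v ⊤ (volume.restrict (Ioo ax bx)) :=
  stmt3_general ax bx ay bY hy Ω hΩ u hu1 huBV v hv
end

section
/- Let 0 < ω ≤ 2, C ∈ (-1, 0), and consider the relaxation (collision) map on ℝ² given by R(f_+, f_-) = ((1-ω) f_+ + ω f_+^eq(u), (1-ω) f_- + ω f_-^eq(u)) where u = f_+ + f_-, f_+^eq(u) = u(1+C)/2, f_-^eq(u) = u(1-C)/2. Then R is monotone nondecreasing in each of its two arguments (i.e., both components of R(f_+,f_-) are nondecreasing in both f_+ and f_-) if and only if ω|C| ≤ ω + 2 min(1-ω, 0). -/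
/-- Monotonicity characterization of the D1Q2 BGK relaxation operator
`R(fp, fm) = ((1-ω) fp + ω fp^eq(u), (1-ω) fm + ω fm^eq(u))` with `u = fp + fm`,
`fp^eq(u) = u(1+C)/2`, `fm^eq(u) = u(1-C)/2`:
`R` is monotone nondecreasing in each argument iff `ω|C| ≤ ω + 2 min(1-ω, 0)`. -/
theorem stmt5 (ω C : ℝ) (hω : ω ∈ Set.Ioc (0:ℝ) 2) (hC : C ∈ Set.Ioo (-1:ℝ) 0) :
    (((∀ fm : ℝ, Monotone fun fp : ℝ => (1 - ω) * fp + ω * ((fp + fm) * (1 + C) / 2)) ∧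
      (∀ fp : ℝ, Monotone fun fm : ℝ => (1 - ω) * fp + ω * ((fp + fm) * (1 + C) / 2))) ∧
     ((∀ fm : ℝ, Monotone fun fp : ℝ => (1 - ω) * fm + ω * ((fp + fm) * (1 - C) / 2)) ∧
      (∀ fp : ℝ, Monotone fun fm : ℝ => (1 - ω) * fm + ω * ((fp + fm) * (1 - C) / 2))))
    ↔ ω * |C| ≤ ω + 2 * min (1 - ω) 0 := by
  obtain ⟨hω0, hω2⟩ := hω
  obtain ⟨hC1, hC0⟩ := hC
  have habs : |C| = -C := abs_of_neg hC0
  constructor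
  · rintro ⟨⟨h1, -⟩, -⟩
    have key := h1 0 (show (0:ℝ) ≤ 1 by norm_num)
    simp only [mul_zero, mul_one, add_zero, zero_add] at key
    rw [habs]
    rcases le_or_gt (1 - ω) 0 with h | h
    · rw [min_eq_left h]; nlinarith
    · rw [min_eq_right h.le]; nlinarith
  · intro h
    rw [habs] at h
    have hmin : min (1 - ω) 0 ≤ 1 - ω := min_le_left _ _
    have hkey : 0 ≤ (1 - ω) + ω * (1 + C) / 2 := by nlinarith
    have hkey2 : 0 ≤ (1 - ω) + ω * (1 - C) / 2 := by nlinarith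
    have hp : 0 ≤ ω * (1 + C) / 2 := by nlinarith
    have hm : 0 ≤ ω * (1 - C) / 2 := by nlinarith
    refine ⟨⟨fun fm a b hab => ?_, fun fp a b hab => ?_⟩,
           fun fm a b hab => ?_, fun fp a b hab => ?_⟩ <;> simp only <;> nlinarith
end

section
/- Let Φ: K → K be a map on a product K = Π_{k=1}^q [m_k, M_k] ⊂ ℝ^q that is monotone nondecreasing in each argument and conserves the sum (Σ_k Φ_k(f) = Σ_k f_k for all f ∈ K). Then Φ is an ℓ^1-contraction: Σ_k |Φ_k(g) - Φ_k(f)| ≤ Σ_k |g_k - f_k| for all f, g ∈ K. -/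
/-- Finite-dimensional Crandall–Tartar lemma: a monotone, sum-conserving self-map of a
product of intervals is an ℓ¹-contraction. -/
theorem stmt7 (q : ℕ) (m M : Fin q → ℝ) (hmM : ∀ k, m k ≤ M k)
    (K : Set (Fin q → ℝ)) (hK : K = {f | ∀ k, f k ∈ Set.Icc (m k) (M k)})
    (Φ : (Fin q → ℝ) → Fin q → ℝ)
    (hmaps : Set.MapsTo Φ K K)
    (hmono : ∀ f ∈ K, ∀ g ∈ K, f ≤ g → Φ f ≤ Φ g)
    (hcons : ∀ f ∈ K, ∑ k, Φ f k = ∑ k, f k) :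
    ∀ f ∈ K, ∀ g ∈ K, ∑ k, |Φ g k - Φ f k| ≤ ∑ k, |g k - f k| := by
  subst hK
  intro f hf g hg
  set h : Fin q → ℝ := fun k => max (f k) (g k) with hh
  have hhK : h ∈ {f | ∀ k, f k ∈ Set.Icc (m k) (M k)} := by
    intro k
    exact ⟨le_trans (hf k).1 (le_max_left _ _), max_le (hf k).2 (hg k).2⟩
  have hfh : Φ f ≤ Φ h := hmono f hf h hhK (fun k => le_max_left _ _)
  have hgh : Φ g ≤ Φ h := hmono g hg h hhK (fun k => le_max_right _ _)
  have step1 : ∑ k, |Φ g k - Φ f k| ≤ ∑ k, (2 * Φ h k - Φ f k - Φ g k) := by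
    apply Finset.sum_le_sum
    intro k _
    rw [abs_sub_le_iff]
    constructor <;> [linarith [hfh k, hgh k]; linarith [hfh k, hgh k]]
  have step2 : ∑ k, (2 * Φ h k - Φ f k - Φ g k) = ∑ k, |g k - f k| := by
    have : ∀ k, 2 * h k - f k - g k = |g k - f k| := by
      intro k
      rcases le_total (f k) (g k) with hle | hle
      · rw [abs_of_nonneg (by linarith)]; simp [hh, max_eq_right hle]; ring
      · rw [abs_of_nonpos (by linarith)]; simp [hh, max_eq_left hle]; ring
    calc ∑ k, (2 * Φ h k - Φ f k - Φ g k)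
        = 2 * ∑ k, Φ h k - ∑ k, Φ f k - ∑ k, Φ g k := by
          rw [Finset.mul_sum, ← Finset.sum_sub_distrib, ← Finset.sum_sub_distrib]
      _ = 2 * ∑ k, h k - ∑ k, f k - ∑ k, g k := by
          rw [hcons f hf, hcons g hg, hcons h hhK]
      _ = ∑ k, (2 * h k - f k - g k) := by
          rw [Finset.mul_sum, ← Finset.sum_sub_distrib, ← Finset.sum_sub_distrib]
      _ = ∑ k, |g k - f k| := Finset.sum_congr rfl (fun k _ => this k)
  linarith
end

section
/- Under the D2Q5 monotonicity conditions (as in the preceding context), excluding the trivial case where max_{|u|≤M}|f_x'| = max_{|u|≤M}|f_y'| = 0, the relaxation parameters necessarily satisfy (ω_s, ω_a) ∈ (0,2)×(0,2), i.e., neither parameter can equal 2. -/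
/-- Under the D2Q5 monotonicity conditions and in the nontrivial case, neither
relaxation parameter can equal `2`: `(ωs, ωa) ∈ (0,2) × (0,2)`. -/
theorem stmt14 (fx fy : ℝ → ℝ) (hfx : ContDiff ℝ 1 fx) (hfy : ContDiff ℝ 1 fy)
    (lam M ax ay ωs ωa : ℝ) (hlam : 0 < lam) (hM : 0 < M)
    (hωs : ωs ∈ Set.Ioc (0:ℝ) 2) (hωa : ωa ∈ Set.Ioc (0:ℝ) 2)
    (h1 : ωs * (1 - 2 * ax - 2 * ay) ≥ max 0 (ωs - 1))
    (h2 : ωa / 2 * (sSup ((fun u => |deriv fx u|) '' Set.Icc (-M) M) / lam)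
        ≤ ωs * ax + 1 / 2 * min (2 - ωs - ωa) (min 0 (ωa - ωs)))
    (h3 : ωa / 2 * (sSup ((fun u => |deriv fy u|) '' Set.Icc (-M) M) / lam)
        ≤ ωs * ay + 1 / 2 * min (2 - ωs - ωa) (min 0 (ωa - ωs)))
    (hnontrivial : ¬ (sSup ((fun u => |deriv fx u|) '' Set.Icc (-M) M) = 0 ∧
                      sSup ((fun u => |deriv fy u|) '' Set.Icc (-M) M) = 0)) :
    ωs < 2 ∧ ωa < 2 := by
  obtain ⟨hωs0, hωs2⟩ := hωs
  obtain ⟨hωa0, hωa2⟩ := hωa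
  set Sx := sSup ((fun u => |deriv fx u|) '' Set.Icc (-M) M) with hSxdef
  set Sy := sSup ((fun u => |deriv fy u|) '' Set.Icc (-M) M) with hSydef
  have hSx : 0 ≤ Sx := Real.sSup_nonneg (by rintro x ⟨u, _, rfl⟩; exact abs_nonneg _)
  have hSy : 0 ≤ Sy := Real.sSup_nonneg (by rintro x ⟨u, _, rfl⟩; exact abs_nonneg _)
  have hm1 : min (2 - ωs - ωa) (min 0 (ωa - ωs)) ≤ 2 - ωs - ωa := min_le_left _ _
  have hm2 : min (2 - ωs - ωa) (min 0 (ωa - ωs)) ≤ 0 :=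
    le_trans (min_le_right _ _) (min_le_left _ _)
  have hm3 : min (2 - ωs - ωa) (min 0 (ωa - ωs)) ≤ ωa - ωs :=
    le_trans (min_le_right _ _) (min_le_right _ _)
  have hmaxr : (ωs - 1 : ℝ) ≤ max 0 (ωs - 1) := le_max_right _ _
  have hmaxl : (0 : ℝ) ≤ max 0 (ωs - 1) := le_max_left _ _
  obtain ⟨m, hmdef⟩ : ∃ m : ℝ, m = min (2 - ωs - ωa) (min 0 (ωa - ωs)) := ⟨_, rfl⟩
  obtain ⟨X, hXdef⟩ : ∃ X : ℝ, X = max 0 (ωs - 1) := ⟨_, rfl⟩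
  rw [← hmdef] at h2 h3 hm1 hm2 hm3
  rw [← hXdef] at h1 hmaxr hmaxl
  have hdx : 0 ≤ Sx / lam := div_nonneg hSx hlam.le
  have hdy : 0 ≤ Sy / lam := div_nonneg hSy hlam.le
  have hLx : 0 ≤ ωa / 2 * (Sx / lam) := mul_nonneg (by linarith) hdx
  have hLy : 0 ≤ ωa / 2 * (Sy / lam) := mul_nonneg (by linarith) hdy
  constructor
  · rcases lt_or_eq_of_le hωs2 with h | h
    · exact h
    · exfalso; subst h
      nlinarith [hLx, hLy, h1, h2, h3, hm1, hm3, hmaxr]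
  · rcases lt_or_eq_of_le hωa2 with h | h
    · exact h
    · exfalso; subst h
      nlinarith [hdx, hdy, h1, h2, h3, hm1, hm3, hmaxl, hωs0]
end
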